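/- arXiv:1308.6596 — 5 statements merged into one kernel-verified Lean document; each statement's English description precedes it below -/
import Mathlib

section
/- Set v_j = v_j' − u_j ∈ K[U_d,V_d'] for j = 1,…,d. Under the embedding ι : F_d → W_d with ι(x_j) = (y_j, a_j), the following hold for all 1 ≤ i,j,k ≤ d and all w in the commutator ideal F_d': (1) ι([x_i,x_j]) = a_i v_j − a_j v_i ∈ M_d; (2) ι(x_k w) = ι(w)·u_k; (3) ι([w,x_k]) = ι(w)·v_k. In particular ι maps F_d' into M_d and intertwines the K[U_d,V_d]-module action on F_d' (given by w·u_k = x_k w, w·v_k = [w,x_k]) with the K[U_d,V_d']-module action on M_d after the substitution v_j ↦ v_j' − u_j. -/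
noncomputable section

/-- The metabelian relation on the free associative algebra:
products of two commutators are identified with zero. -/
def MetabRel (K : Type*) [CommRing K] (d : ℕ) (p q : FreeAlgebra K (Fin d)) : Prop :=
  q = 0 ∧ ∃ a b c e : FreeAlgebra K (Fin d), p = (a * b - b * a) * (c * e - e * c)

/-- The free metabelian associative algebra `F_d = A_d/(A_d')²`. -/
abbrev FreeMetab (K : Type*) [CommRing K] (d : ℕ) := RingQuot (MetabRel K d)

/-- The free generators `x_i` of `F_d`. -/
def xg (K : Type*) [CommRing K] (d : ℕ) (i : Fin d) : FreeMetab K d :=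
  RingQuot.mkAlgHom K (MetabRel K d) (FreeAlgebra.ι K i)

/-- The commutator ideal `F_d'`: the two-sided ideal generated by all commutators. -/
def commIdeal (K : Type*) [CommRing K] (d : ℕ) : Ideal (FreeMetab K d) :=
  Ideal.span {z | ∃ a f g b : FreeMetab K d, z = a * (f * g - g * f) * b}


abbrev PolyY (K : Type*) [CommRing K] (d : ℕ) := MvPolynomial (Fin d) K
/-- `K[U_d, V_d']`, with `inl = u`-variables and `inr = v'`-variables. -/
abbrev Poly2 (K : Type*) [CommRing K] (d : ℕ) := MvPolynomial (Fin d ⊕ Fin d) K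
/-- The free `K[U_d,V_d']`-module `M_d` with basis `a_1,…,a_d`. -/
abbrev Md (K : Type*) [CommRing K] (d : ℕ) := Fin d → Poly2 K d

/-- `K[Y_d] → K[U_d,V_d']`, `y_j ↦ u_j`. -/
def toU (K : Type*) [CommRing K] (d : ℕ) : PolyY K d →+* Poly2 K d :=
  (MvPolynomial.aeval fun j : Fin d => (MvPolynomial.X (Sum.inl j) : Poly2 K d)).toRingHom

/-- `K[Y_d] → K[U_d,V_d']`, `y_j ↦ v_j'`. -/
def toV (K : Type*) [CommRing K] (d : ℕ) : PolyY K d →+* Poly2 K d :=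
  (MvPolynomial.aeval fun j : Fin d => (MvPolynomial.X (Sum.inr j) : Poly2 K d)).toRingHom

/-- left action of `K[Y_d]` on `M_d`: `y_j · a_i = a_i u_j`. -/
instance instLmod (K : Type*) [CommRing K] (d : ℕ) : Module (PolyY K d) (Md K d) :=
  Module.compHom _ (toU K d)

def toVop (K : Type*) [CommRing K] (d : ℕ) : (PolyY K d)ᵐᵒᵖ →+* Poly2 K d where
  toFun r := toV K d r.unop
  map_one' := by simp
  map_mul' a b := by
    simp [MulOpposite.unop_mul, map_mul, mul_comm]
  map_zero' := by simp
  map_add' a b := by simp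

/-- right action of `K[Y_d]` on `M_d`: `a_i · y_j = a_i v_j'`. -/
instance instRmod (K : Type*) [CommRing K] (d : ℕ) : Module (PolyY K d)ᵐᵒᵖ (Md K d) :=
  Module.compHom _ (toVop K d)

instance instComm (K : Type*) [CommRing K] (d : ℕ) :
    SMulCommClass (PolyY K d) (PolyY K d)ᵐᵒᵖ (Md K d) where
  smul_comm r s m := by
    funext i
    show toU K d r * (toVop K d s * m i) = toVop K d s * (toU K d r * m i)
    ring

instance instT1 (K : Type*) [CommRing K] (d : ℕ) : IsScalarTower K (PolyY K d) (Md K d) where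
  smul_assoc k p m := by
    funext i
    show toU K d (k • p) * m i = k • (toU K d p * m i)
    rw [Algebra.smul_def, Algebra.smul_def, map_mul]
    simp [toU, mul_assoc]

instance instT2 (K : Type*) [CommRing K] (d : ℕ) : IsScalarTower K (PolyY K d)ᵐᵒᵖ (Md K d) where
  smul_assoc k p m := by
    funext i
    show toVop K d (k • p) * m i = k • (toVop K d p * m i)
    have h : toVop K d (k • p) = k • toVop K d p := by
      simp only [toVop, RingHom.coe_mk, MonoidHom.coe_mk, OneHom.coe_mk,
        MulOpposite.unop_smul]
      exact map_smul (MvPolynomial.aeval fun j : Fin d => (MvPolynomial.X (Sum.inr j) : Poly2 K d)).toLinearMap k p.unop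
    rw [h, smul_mul_assoc]

/-- The wreath product `W_d = K[Y_d] ⋉ M_d`. -/
abbrev Wd (K : Type*) [CommRing K] (d : ℕ) := TrivSqZeroExt (PolyY K d) (Md K d)

/-- The substituted variable `v_j = v_j' - u_j` of `K[U_d,V_d']`. -/
def vsub (K : Type*) [CommRing K] (d : ℕ) (j : Fin d) : Poly2 K d :=
  MvPolynomial.X (Sum.inr j) - MvPolynomial.X (Sum.inl j)

/-- Under the embedding `ι : F_d → W_d`, `x_j ↦ (y_j,a_j)`:
`ι([x_i,x_j]) = a_i v_j - a_j v_i`; moreover `ι` maps `F_d'` into `M_d` and,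
for `w ∈ F_d'`, `ι(x_k w) = ι(w)·u_k` and `ι([w,x_k]) = ι(w)·v_k`
(after the substitution `v_k = v_k' - u_k`). -/
theorem embedding_formulas
    (K : Type*) [Field K] [CharZero K] (d : ℕ) (hd : 2 ≤ d)
    (ι : FreeMetab K d →ₐ[K] Wd K d) (hinj : Function.Injective ι)
    (hι : ∀ j, ι (xg K d j) =
      TrivSqZeroExt.inl (MvPolynomial.X j) + TrivSqZeroExt.inr (Pi.single j 1)) :
    (∀ i j, ι (xg K d i * xg K d j - xg K d j * xg K d i) =
        TrivSqZeroExt.inr (Pi.single i (vsub K d j) - Pi.single j (vsub K d i))) ∧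
      ∀ w ∈ commIdeal K d,
        (ι w).fst = 0 ∧
        (∀ k, ι (xg K d k * w) =
          TrivSqZeroExt.inr ((MvPolynomial.X (Sum.inl k) : Poly2 K d) • (ι w).snd)) ∧
        (∀ k, ι (w * xg K d k - xg K d k * w) =
          TrivSqZeroExt.inr (vsub K d k • (ι w).snd)) := by

  classical
  have htoU : ∀ k : Fin d, toU K d (MvPolynomial.X k) = MvPolynomial.X (Sum.inl k) := by
    intro k; simp [toU]
  have htoV : ∀ k : Fin d, toV K d (MvPolynomial.X k) = MvPolynomial.X (Sum.inr k) := by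
    intro k; simp [toV]
  have hL : ∀ (p : PolyY K d) (m : Md K d) (i : Fin d), (p • m) i = toU K d p * m i :=
    fun p m i => rfl
  have hR : ∀ (p : PolyY K d) (m : Md K d) (i : Fin d),
      (MulOpposite.op p • m) i = toV K d p * m i := fun p m i => rfl
  have hfst : ∀ w ∈ commIdeal K d, (ι w).fst = 0 := by
    intro w hw
    have hker : commIdeal K d ≤
        RingHom.ker ((TrivSqZeroExt.fstHom K (PolyY K d) (Md K d)).comp ι) := by
      rw [commIdeal, Ideal.span_le]
      rintro z ⟨a, f, g, b, rfl⟩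
      simp only [SetLike.mem_coe, RingHom.mem_ker, AlgHom.coe_comp, Function.comp_apply,
        map_mul, map_sub, TrivSqZeroExt.fstHom_apply]
      ring
    exact hker hw
  constructor
  · intro i j
    rw [map_sub, map_mul, map_mul, hι, hι]
    apply TrivSqZeroExt.ext
    · simp only [TrivSqZeroExt.fst_sub, TrivSqZeroExt.fst_mul, TrivSqZeroExt.fst_add,
        TrivSqZeroExt.fst_inl, TrivSqZeroExt.fst_inr]
      ring
    · funext t
      simp only [TrivSqZeroExt.snd_sub, TrivSqZeroExt.snd_mul, TrivSqZeroExt.fst_add,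
        TrivSqZeroExt.fst_inl, TrivSqZeroExt.fst_inr, TrivSqZeroExt.snd_add,
        TrivSqZeroExt.snd_inl, TrivSqZeroExt.snd_inr, TrivSqZeroExt.snd_inr,
        add_zero, zero_add, Pi.sub_apply, Pi.add_apply, hL, hR, htoU, htoV,
        vsub, Pi.single_apply]
      by_cases hti : t = i <;> by_cases htj : t = j <;>
        simp [hti, htj] <;> split_ifs <;> subst_vars <;> ring
  · intro w hw
    have h0 : (ι w).fst = 0 := hfst w hw
    refine ⟨h0, ?_, ?_⟩
    · intro k
      rw [map_mul, hι]
      apply TrivSqZeroExt.ext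
      · simp [h0]
      · funext t
        simp only [TrivSqZeroExt.snd_mul, TrivSqZeroExt.fst_add, TrivSqZeroExt.fst_inl,
          TrivSqZeroExt.fst_inr, TrivSqZeroExt.snd_add, TrivSqZeroExt.snd_inl,
          TrivSqZeroExt.snd_inr, add_zero, zero_add, h0, map_zero, Pi.add_apply,
          Pi.smul_apply, smul_eq_mul, hL, hR, htoU, htoV]
        simp
    · intro k
      rw [map_sub, map_mul, map_mul, hι]
      apply TrivSqZeroExt.ext
      · simp only [TrivSqZeroExt.fst_sub, TrivSqZeroExt.fst_mul, TrivSqZeroExt.fst_add,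
          TrivSqZeroExt.fst_inl, TrivSqZeroExt.fst_inr, h0]
        ring
      · funext t
        simp only [TrivSqZeroExt.snd_sub, TrivSqZeroExt.snd_mul, TrivSqZeroExt.fst_add,
          TrivSqZeroExt.fst_inl, TrivSqZeroExt.fst_inr, TrivSqZeroExt.snd_add,
          TrivSqZeroExt.snd_inl, TrivSqZeroExt.snd_inr, add_zero, zero_add, h0,
          map_zero, Pi.sub_apply, Pi.add_apply, Pi.smul_apply, smul_eq_mul,
          hL, hR, htoU, htoV, vsub]
        ring
end
end

section
/- In the free metabelian associative algebra F_d, for every element f of the commutator ideal F_d' and all 1 ≤ i,j ≤ d the following identities hold: (1) x_i(x_j f) = x_j(x_i f); (2) [[f,x_i],x_j] = [[f,x_j],x_i]; (3) [x_i f, x_j] = x_i [f,x_j]. Consequently the prescriptions f·u_i = x_i f and f·v_i = [f,x_i] give a well-defined module structure on F_d' over the polynomial algebra K[U_d,V_d] = K[u_1,…,u_d,v_1,…,v_d]. -/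
noncomputable section

/-- `K[U_d,V_d]`. -/
abbrev PolyUV (K : Type*) [CommRing K] (d : ℕ) := MvPolynomial (Fin d ⊕ Fin d) K

def uP (K : Type*) [CommRing K] (d : ℕ) (i : Fin d) : PolyUV K d := MvPolynomial.X (Sum.inl i)
def vP (K : Type*) [CommRing K] (d : ℕ) (i : Fin d) : PolyUV K d := MvPolynomial.X (Sum.inr i)

/-- Action of a monomial of `K[U_d,V_d]` on `F_d`, implementing
`f·u_i = x_i f` and `f·v_i = [f,x_i]` (on the commutator ideal all the
individual operators commute, so the fixed order of composition is immaterial). -/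
def monAct (K : Type*) [CommRing K] (d : ℕ) (m : (Fin d ⊕ Fin d) →₀ ℕ) :
    Module.End K (FreeMetab K d) :=
  (List.ofFn fun i : Fin d =>
      (LinearMap.mulLeft K (xg K d i) : Module.End K (FreeMetab K d)) ^ m (Sum.inl i)).prod *
  (List.ofFn fun i : Fin d =>
      (LinearMap.mulRight K (xg K d i) - LinearMap.mulLeft K (xg K d i) :
        Module.End K (FreeMetab K d)) ^ m (Sum.inr i)).prod

/-- The action of `K[U_d,V_d]` on the commutator ideal of `F_d`. -/
def act (K : Type*) [CommRing K] (d : ℕ) (p : PolyUV K d) (w : FreeMetab K d) : FreeMetab K d :=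
  ∑ m ∈ p.support, p.coeff m • (monAct K d m w)

/-- The commutator ideal of `F_d` as a `K`-subspace. -/
def commSub (K : Type*) [CommRing K] (d : ℕ) : Submodule K (FreeMetab K d) :=
  (commIdeal K d).restrictScalars K

/-!
In `F_d` a product of two commutators vanishes, and then so does `[u,v] z [g,h]`, because
`[u,v] z [g,h] = [u,v] [zg,h] - [u,v] [z,h] g`. Hence commutators annihilate `F_d'` from both
sides. The two sides of each identity (1)–(3) differ by `[x_i,x_j] f` or by
`f [x_i,x_j] - [x_i,x_j] f`, so they hold on `F_d'`; and they say precisely that the operators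
`f ↦ x_i f` and `f ↦ [f,x_i]` on `F_d'` commute pairwise. They therefore generate a commutative
subalgebra of `End_K(F_d')`, which receives `K[U_d,V_d]`.
-/

namespace MvPolynomial

open scoped IsMulCommutative in
theorem exists_algHom_X_eq_of_commute {R σ B : Type*} [CommSemiring R] [Semiring B] [Algebra R B]
    (e : σ → B) (he : ∀ s t, Commute (e s) (e t)) :
    ∃ ρ : MvPolynomial σ R →ₐ[R] B, ∀ s, ρ (X s) = e s := by
  have := Algebra.isMulCommutative_adjoin R (s := Set.range e) (by
    rintro _ ⟨s, rfl⟩ _ ⟨t, rfl⟩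
    exact he s t)
  exact ⟨(Algebra.adjoin R (Set.range e)).val.comp
    (aeval fun s => ⟨e s, Algebra.subset_adjoin (Set.mem_range_self s)⟩), fun s => by simp⟩

end MvPolynomial

section LieIdentities

variable {R : Type*} [Ring R] {x y f : R}

theorem mul_mul_comm_of_lie_mul_eq_zero (h : ⁅x, y⁆ * f = 0) : x * (y * f) = y * (x * f) := by
  rw [← sub_eq_zero, ← h, Ring.lie_def]
  noncomm_ring

theorem lie_mul_left_of_lie_mul_eq_zero (h : ⁅x, y⁆ * f = 0) : ⁅x * f, y⁆ = x * ⁅f, y⁆ := by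
  rw [← sub_eq_zero, ← h]
  simp only [Ring.lie_def]
  noncomm_ring

theorem lie_lie_comm_of_lie_mul_eq_zero (h₁ : ⁅x, y⁆ * f = 0) (h₂ : f * ⁅x, y⁆ = 0) :
    ⁅⁅f, x⁆, y⁆ = ⁅⁅f, y⁆, x⁆ := by
  have : ⁅⁅f, x⁆, y⁆ - ⁅⁅f, y⁆, x⁆ = f * ⁅x, y⁆ - ⁅x, y⁆ * f := by
    simp only [Ring.lie_def]
    noncomm_ring
  rwa [h₁, h₂, sub_zero, sub_eq_zero] at this

end LieIdentities

section Metabelian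

variable {R : Type*} [Ring R] (hR : ∀ a b c e : R, ⁅a, b⁆ * ⁅c, e⁆ = 0)
include hR

theorem lie_mul_mul_lie_eq_zero (u v z g h : R) : ⁅u, v⁆ * z * ⁅g, h⁆ = 0 := by
  have : ⁅u, v⁆ * z * ⁅g, h⁆ = ⁅u, v⁆ * ⁅z * g, h⁆ - ⁅u, v⁆ * ⁅z, h⁆ * g := by
    simp only [Ring.lie_def]
    noncomm_ring
  rw [this, hR, hR, zero_mul, sub_zero]

theorem lie_mul_eq_zero_of_mem_span (u v : R) {f : R}
    (hf : f ∈ Ideal.span {z | ∃ a g h b : R, z = a * ⁅g, h⁆ * b}) : ⁅u, v⁆ * f = 0 := by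
  -- generalized over `y` to absorb the left multiplications of `Ideal.span`
  suffices ∀ y, ⁅u, v⁆ * (y * f) = 0 by simpa using this 1
  induction hf using Submodule.span_induction with
  | mem _ hx =>
    obtain ⟨a, g, h, b, rfl⟩ := hx
    intro y
    calc ⁅u, v⁆ * (y * (a * ⁅g, h⁆ * b)) = ⁅u, v⁆ * (y * a) * ⁅g, h⁆ * b := by
          simp only [mul_assoc]
      _ = 0 := by rw [lie_mul_mul_lie_eq_zero hR, zero_mul]
  | zero => simp
  | add _ _ _ _ hx hy => intro y; rw [mul_add, mul_add, hx, hy, add_zero]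
  | smul _ _ _ hx => intro y; rw [smul_eq_mul, ← mul_assoc y, hx]

theorem mul_lie_eq_zero_of_mem_span (u v : R) {f : R}
    (hf : f ∈ Ideal.span {z | ∃ a g h b : R, z = a * ⁅g, h⁆ * b}) : f * ⁅u, v⁆ = 0 := by
  induction hf using Submodule.span_induction with
  | mem _ hx =>
    obtain ⟨a, g, h, b, rfl⟩ := hx
    calc a * ⁅g, h⁆ * b * ⁅u, v⁆ = a * (⁅g, h⁆ * b * ⁅u, v⁆) := by simp only [mul_assoc]
      _ = 0 := by rw [lie_mul_mul_lie_eq_zero hR, mul_zero]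
  | zero => simp
  | add _ _ _ _ hx hy => rw [add_mul, hx, hy, add_zero]
  | smul _ _ _ hx => rw [smul_eq_mul, mul_assoc, hx, mul_zero]

end Metabelian

theorem exists_mvPolynomial_algHom_mul_lie {K A ι : Type*} [CommRing K] [Ring A] [Algebra K A]
    (M : Submodule K A) (x : ι → A)
    (hmul : ∀ i, ∀ m ∈ M, x i * m ∈ M) (hlie : ∀ i, ∀ m ∈ M, ⁅m, x i⁆ ∈ M)
    (hleft : ∀ i j, ∀ m ∈ M, ⁅x i, x j⁆ * m = 0) (hright : ∀ i j, ∀ m ∈ M, m * ⁅x i, x j⁆ = 0) :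
    ∃ ρ : MvPolynomial (ι ⊕ ι) K →ₐ[K] Module.End K M,
      (∀ i (m : M), (ρ (.X (.inl i)) m : A) = x i * m) ∧
      (∀ i (m : M), (ρ (.X (.inr i)) m : A) = ⁅(m : A), x i⁆) := by
  let L i : Module.End K M := (LinearMap.mulLeft K (x i)).restrict (hmul i)
  let D i : Module.End K M :=
    (LinearMap.mulRight K (x i) - LinearMap.mulLeft K (x i)).restrict (hlie i)
  have hcomm : ∀ s t, Commute (Sum.elim L D s) (Sum.elim L D t) := by
    rintro (i | i) (j | j) <;> refine LinearMap.ext fun m => Subtype.ext ?_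
    · exact mul_mul_comm_of_lie_mul_eq_zero (hleft i j m m.2)
    · exact (lie_mul_left_of_lie_mul_eq_zero (hleft i j m m.2)).symm
    · exact lie_mul_left_of_lie_mul_eq_zero (hleft j i m m.2)
    · exact lie_lie_comm_of_lie_mul_eq_zero (hleft j i m m.2) (hright j i m m.2)
  obtain ⟨ρ, hρ⟩ := MvPolynomial.exists_algHom_X_eq_of_commute (R := K) _ hcomm
  exact ⟨ρ, fun i m => by rw [hρ]; rfl, fun i m => by rw [hρ]; rfl⟩

theorem FreeMetab.lie_mul_lie {K : Type*} [CommRing K] {d : ℕ} (a b c e : FreeMetab K d) :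
    ⁅a, b⁆ * ⁅c, e⁆ = 0 := by
  obtain ⟨a, rfl⟩ := RingQuot.mkAlgHom_surjective K (MetabRel K d) a
  obtain ⟨b, rfl⟩ := RingQuot.mkAlgHom_surjective K (MetabRel K d) b
  obtain ⟨c, rfl⟩ := RingQuot.mkAlgHom_surjective K (MetabRel K d) c
  obtain ⟨e, rfl⟩ := RingQuot.mkAlgHom_surjective K (MetabRel K d) e
  simpa only [Ring.lie_def, map_mul, map_sub, map_zero] using
    RingQuot.mkAlgHom_rel K (show MetabRel K d _ 0 from ⟨rfl, a, b, c, e, rfl⟩)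

theorem module_structure_on_commutator_ideal_general
    (K : Type*) [Field K] (d : ℕ) :
    (∀ f ∈ commIdeal K d, ∀ i j : Fin d,
        xg K d i * (xg K d j * f) = xg K d j * (xg K d i * f) ∧
        ((f * xg K d i - xg K d i * f) * xg K d j - xg K d j * (f * xg K d i - xg K d i * f))
          = ((f * xg K d j - xg K d j * f) * xg K d i
              - xg K d i * (f * xg K d j - xg K d j * f)) ∧
        ((xg K d i * f) * xg K d j - xg K d j * (xg K d i * f))
          = xg K d i * (f * xg K d j - xg K d j * f)) ∧
      ∃ ρ : PolyUV K d →ₐ[K] Module.End K (commSub K d),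
        (∀ i : Fin d, ∀ f : commSub K d, (ρ (uP K d i) f : FreeMetab K d) = xg K d i * f) ∧
        (∀ i : Fin d, ∀ f : commSub K d,
          (ρ (vP K d i) f : FreeMetab K d) = (f : FreeMetab K d) * xg K d i - xg K d i * f) := by
  have hleft i j : ∀ f ∈ commIdeal K d, ⁅xg K d i, xg K d j⁆ * f = 0 := fun _ hf =>
    lie_mul_eq_zero_of_mem_span FreeMetab.lie_mul_lie _ _ hf
  have hright i j : ∀ f ∈ commIdeal K d, f * ⁅xg K d i, xg K d j⁆ = 0 := fun _ hf =>
    mul_lie_eq_zero_of_mem_span FreeMetab.lie_mul_lie _ _ hf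
  refine ⟨fun f hf i j => ⟨mul_mul_comm_of_lie_mul_eq_zero (hleft i j f hf),
    lie_lie_comm_of_lie_mul_eq_zero (hleft i j f hf) (hright i j f hf),
    lie_mul_left_of_lie_mul_eq_zero (hleft i j f hf)⟩, ?_⟩
  exact exists_mvPolynomial_algHom_mul_lie (commSub K d) (xg K d)
    (fun _ _ hf => Ideal.mul_mem_left _ _ hf)
    (fun i f _ => Ideal.subset_span ⟨1, f, xg K d i, 1, by simp [Ring.lie_def]⟩) hleft hright

/-- For `f` in the commutator ideal `F_d'` and all `i, j`:
(1) `x_i(x_j f) = x_j(x_i f)`; (2) `[[f,x_i],x_j] = [[f,x_j],x_i]`;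
(3) `[x_i f, x_j] = x_i [f,x_j]`.  Consequently the prescriptions
`f·u_i = x_i f`, `f·v_i = [f,x_i]` define a `K[U_d,V_d]`-module structure on `F_d'`,
i.e. there is a `K`-algebra homomorphism `ρ : K[U_d,V_d] → End_K(F_d')` with
`ρ(u_i) f = x_i f` and `ρ(v_i) f = [f,x_i]`. -/
theorem module_structure_on_commutator_ideal
    (K : Type*) [Field K] [CharZero K] (d : ℕ) (hd : 2 ≤ d) :
    (∀ f ∈ commIdeal K d, ∀ i j : Fin d,
        xg K d i * (xg K d j * f) = xg K d j * (xg K d i * f) ∧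
        ((f * xg K d i - xg K d i * f) * xg K d j - xg K d j * (f * xg K d i - xg K d i * f))
          = ((f * xg K d j - xg K d j * f) * xg K d i
              - xg K d i * (f * xg K d j - xg K d j * f)) ∧
        ((xg K d i * f) * xg K d j - xg K d j * (xg K d i * f))
          = xg K d i * (f * xg K d j - xg K d j * f)) ∧
      ∃ ρ : PolyUV K d →ₐ[K] Module.End K (commSub K d),
        (∀ i : Fin d, ∀ f : commSub K d, (ρ (uP K d i) f : FreeMetab K d) = xg K d i * f) ∧
        (∀ i : Fin d, ∀ f : commSub K d,
          (ρ (vP K d i) f : FreeMetab K d) = (f : FreeMetab K d) * xg K d i - xg K d i * f) :=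
  module_structure_on_commutator_ideal_general K d
end
end

section
/- For all polynomials v_1, v_2 ∈ ω(K[V_{d−1}]) (polynomials in v_1,…,v_{d−1} with zero constant term), the map π satisfies π(v_1 v_2) = π(v_1)·v_2 + π(v_2)·v_1, where on the right-hand side · denotes the K[U_d,V_d]-module action on F_d'. -/
noncomputable section

/-- The action of a monomial in `u_1,…,u_d,v_1,…,v_d` (the variables corresponding to
`x_1,…,x_d`) on `F_{d+1}`, implementing `f·u_i = x_i f`, `f·v_i = [f,x_i]`. -/
def monActS (K : Type*) [CommRing K] (d : ℕ) (m : (Fin d ⊕ Fin d) →₀ ℕ) :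
    Module.End K (FreeMetab K (d + 1)) :=
  (List.ofFn fun i : Fin d =>
      (LinearMap.mulLeft K (xg K (d + 1) i.castSucc) :
        Module.End K (FreeMetab K (d + 1))) ^ m (Sum.inl i)).prod *
  (List.ofFn fun i : Fin d =>
      (LinearMap.mulRight K (xg K (d + 1) i.castSucc)
          - LinearMap.mulLeft K (xg K (d + 1) i.castSucc) :
        Module.End K (FreeMetab K (d + 1))) ^ m (Sum.inr i)).prod

/-- The action of `K[U_d,V_d] ⊆ K[U_{d+1},V_{d+1}]` on `F_{d+1}`. -/
def actS (K : Type*) [CommRing K] (d : ℕ) (p : PolyUV K d) (w : FreeMetab K (d + 1)) :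
    FreeMetab K (d + 1) :=
  ∑ m ∈ p.support, p.coeff m • (monActS K d m w)

/-- The map `π : K[U_d,V_d]_ω → F_{d+1}'`, defined on monomials by
`π(u_{i_1}⋯u_{i_m}v_{j_1}⋯v_{j_n}) = Σ_k [x_{d+1},x_{j_k}]·(v_{j_1}⋯v̂_{j_k}⋯v_{j_n}u_{i_1}⋯u_{i_m})`. -/
def piMap (K : Type*) [CommRing K] (d : ℕ) (p : PolyUV K d) : FreeMetab K (d + 1) :=
  ∑ m ∈ p.support, p.coeff m •
    ∑ k : Fin d, (m (Sum.inr k)) •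
      monActS K d (m - Finsupp.single (Sum.inr k) 1)
        (xg K (d + 1) (Fin.last d) * xg K (d + 1) k.castSucc
          - xg K (d + 1) k.castSucc * xg K (d + 1) (Fin.last d))

/-- `ω(K[V_d])`: the span of the nonconstant monomials in `v_1,…,v_d` only. -/
def omegaV (K : Type*) [CommRing K] (d : ℕ) : Submodule K (PolyUV K d) :=
  Submodule.span K {w : PolyUV K d | ∃ m : (Fin d ⊕ Fin d) →₀ ℕ,
    m ≠ 0 ∧ (∀ i, m (Sum.inl i) = 0) ∧ w = MvPolynomial.monomial m (1 : K)}

/- On the commutator ideal `F'` of a free metabelian algebra, left and right multiplications by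
arbitrary elements pairwise commute, since `F' · F' = 0` kills `[x, y] w` and `w [x, y]`.
So the action of `K[U, V]` on `F'` is an algebra homomorphism into `End F'`. In these terms
`π p = Σ_k (∂p/∂v_k) · [x_{d+1}, x_k]`, and the claimed identity is the Leibniz rule for the
partial derivatives `∂/∂v_k`. -/

namespace MvPolynomial

theorem monomial_eq_smul_monomial_one {σ R : Type*} [CommSemiring R] (m : σ →₀ ℕ) (a : R) :
    monomial m a = a • monomial m 1 := by
  rw [smul_monomial, smul_eq_mul, mul_one]

theorem monomial_one_eq_prod_ofFn {R : Type*} [CommSemiring R] {a b : ℕ}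
    (m : (Fin a ⊕ Fin b) →₀ ℕ) :
    monomial m (1 : R) = (List.ofFn fun i => X (.inl i) ^ m (.inl i)).prod *
      (List.ofFn fun i => X (.inr i) ^ m (.inr i)).prod := by
  rw [monomial_eq, C_1, one_mul, Finsupp.prod_fintype _ _ fun _ => pow_zero _,
    Fintype.prod_sum_type, List.prod_ofFn, List.prod_ofFn]

theorem sum_pderiv_mul_apply {σ ι R N : Type*} [CommSemiring R] [AddCommMonoid N] [Module R N]
    (φ : MvPolynomial σ R →ₐ[R] Module.End R N) (s : ι → σ) (c : ι → N) (t : Finset ι)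
    (p q : MvPolynomial σ R) :
    ∑ k ∈ t, φ (pderiv (s k) (p * q)) (c k) =
      φ q (∑ k ∈ t, φ (pderiv (s k) p) (c k)) +
        φ p (∑ k ∈ t, φ (pderiv (s k) q) (c k)) := by
  simp only [pderiv_mul, map_add, map_mul, LinearMap.add_apply, Module.End.mul_apply, map_sum,
    Finset.sum_add_distrib, mul_comm (pderiv _ p) q]

end MvPolynomial

theorem LinearMap.ofFn_prod_pow_comp_subtype {R M : Type*} [Semiring R] [AddCommMonoid M]
    [Module R M] {p : Submodule R M} {n : ℕ} {f : Fin n → Module.End R M}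
    {g : Fin n → Module.End R p} (h : ∀ i, f i ∘ₗ p.subtype = p.subtype ∘ₗ g i)
    (e : Fin n → ℕ) :
    (List.ofFn fun i => f i ^ e i).prod ∘ₗ p.subtype =
      p.subtype ∘ₗ (List.ofFn fun i => g i ^ e i).prod := by
  induction n with
  | zero => rfl
  | succ n ih =>
    simp only [List.ofFn_succ, List.prod_cons, Module.End.mul_eq_comp, LinearMap.comp_assoc,
      ih fun i => h i.succ]
    rw [← LinearMap.comp_assoc, Module.End.commute_pow_left_of_commute (h 0),
      LinearMap.comp_assoc]

namespace FreeMetab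

variable {K : Type*} [CommRing K] {n : ℕ}

theorem commutator_mul_commutator_eq_zero (a b c e : FreeMetab K n) :
    (a * b - b * a) * (c * e - e * c) = 0 := by
  obtain ⟨a, rfl⟩ := RingQuot.mkRingHom_surjective (MetabRel K n) a
  obtain ⟨b, rfl⟩ := RingQuot.mkRingHom_surjective (MetabRel K n) b
  obtain ⟨c, rfl⟩ := RingQuot.mkRingHom_surjective (MetabRel K n) c
  obtain ⟨e, rfl⟩ := RingQuot.mkRingHom_surjective (MetabRel K n) e
  simpa only [map_mul, map_sub, map_zero] using
    RingQuot.mkRingHom_rel (r := MetabRel K n) ⟨rfl, a, b, c, e, rfl⟩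

theorem commutator_mul_mul_commutator_eq_zero (a b y c e : FreeMetab K n) :
    (a * b - b * a) * y * (c * e - e * c) = 0 := by
  calc (a * b - b * a) * y * (c * e - e * c)
      = (a * b - b * a) * (y * (c * e - e * c) - (c * e - e * c) * y)
          + (a * b - b * a) * (c * e - e * c) * y := by
        simp only [mul_sub, sub_mul, mul_assoc]; abel
    _ = 0 := by simp only [commutator_mul_commutator_eq_zero, zero_mul, add_zero]

end FreeMetab

namespace commIdeal

variable {K : Type*} [CommRing K] {n : ℕ}

theorem commutator_mem (f g : FreeMetab K n) : f * g - g * f ∈ commIdeal K n :=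
  Ideal.subset_span ⟨1, f, g, 1, by noncomm_ring⟩

theorem mul_mem_right {w : FreeMetab K n} (r : FreeMetab K n) (hw : w ∈ commIdeal K n) :
    w * r ∈ commIdeal K n := by
  induction hw using Submodule.span_induction with
  | mem z hz =>
    obtain ⟨a, f, g, b, rfl⟩ := hz
    exact Ideal.subset_span ⟨a, f, g, b * r, by noncomm_ring⟩
  | zero => simp
  | add y z _ _ hy hz => simpa only [add_mul] using add_mem hy hz
  | smul c y _ hy => simpa only [smul_eq_mul, mul_assoc] using Ideal.mul_mem_left _ c hy

theorem commutator_mul_mul_eq_zero (f g y : FreeMetab K n) {w : FreeMetab K n}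
    (hw : w ∈ commIdeal K n) : (f * g - g * f) * y * w = 0 := by
  induction hw using Submodule.span_induction generalizing y with
  | mem z hz =>
    obtain ⟨a, h, k, b, rfl⟩ := hz
    rw [← mul_assoc, ← mul_assoc, mul_assoc _ y a,
      FreeMetab.commutator_mul_mul_commutator_eq_zero, zero_mul]
  | zero => simp
  | add z z' _ _ hz hz' => rw [mul_add, hz, hz', add_zero]
  | smul r z _ hz => rw [smul_eq_mul, ← mul_assoc, mul_assoc _ y, hz]

theorem mul_eq_zero {v w : FreeMetab K n} (hv : v ∈ commIdeal K n) (hw : w ∈ commIdeal K n) :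
    v * w = 0 := by
  induction hv using Submodule.span_induction with
  | mem z hz =>
    obtain ⟨a, f, g, b, rfl⟩ := hz
    rw [mul_assoc a, mul_assoc, commutator_mul_mul_eq_zero f g b hw, mul_zero]
  | zero => simp
  | add z z' _ _ hz hz' => rw [add_mul, hz, hz', add_zero]
  | smul r z _ hz => rw [smul_eq_mul, mul_assoc, hz, mul_zero]

end commIdeal

section Operators

variable (K : Type*) [CommRing K] (n : ℕ)

abbrev commSubmodule : Submodule K (FreeMetab K n) := (commIdeal K n).restrictScalars K

-- Instance search does not find `Submodule.addCommGroup` through the `RingQuot`, and without it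
-- `Module.End K (commSubmodule K n)` is not a ring.
instance : AddCommGroup (commSubmodule K n) := Submodule.addCommGroup _

variable {K n}

def leftMulC (x : FreeMetab K n) : Module.End K (commSubmodule K n) :=
  (LinearMap.mulLeft K x).restrict fun _ hw => Ideal.mul_mem_left _ x hw

def rightMulC (x : FreeMetab K n) : Module.End K (commSubmodule K n) :=
  (LinearMap.mulRight K x).restrict fun _ hw => commIdeal.mul_mem_right x hw

theorem commute_leftMulC (x y : FreeMetab K n) : Commute (leftMulC x) (leftMulC y) := by
  refine LinearMap.ext fun w => Subtype.ext ?_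
  change x * (y * w) = y * (x * w)
  rw [← sub_eq_zero, ← mul_assoc, ← mul_assoc, ← sub_mul]
  exact commIdeal.mul_eq_zero (commIdeal.commutator_mem x y) w.2

theorem commute_rightMulC (x y : FreeMetab K n) : Commute (rightMulC x) (rightMulC y) := by
  refine LinearMap.ext fun w => Subtype.ext ?_
  change w * y * x = w * x * y
  rw [← sub_eq_zero, mul_assoc, mul_assoc, ← mul_sub]
  exact commIdeal.mul_eq_zero w.2 (commIdeal.commutator_mem y x)

theorem commute_leftMulC_rightMulC (x y : FreeMetab K n) :
    Commute (leftMulC x) (rightMulC y) :=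
  LinearMap.ext fun w => Subtype.ext (mul_assoc x w y).symm

variable (K n)

def mulOpAlgebra : Subalgebra K (Module.End K (commSubmodule K n)) :=
  Algebra.adjoin K (Set.range leftMulC ∪ Set.range rightMulC)

instance : IsMulCommutative (mulOpAlgebra K n) := by
  refine Algebra.isMulCommutative_adjoin K ?_
  rintro _ (⟨x, rfl⟩ | ⟨x, rfl⟩) _ (⟨y, rfl⟩ | ⟨y, rfl⟩)
  exacts [commute_leftMulC x y, commute_leftMulC_rightMulC x y,
    (commute_leftMulC_rightMulC y x).symm, commute_rightMulC x y]

variable {K n}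

open scoped IsMulCommutative in
def actionHom {ι : Type*} (y : ι → FreeMetab K n) :
    MvPolynomial (ι ⊕ ι) K →ₐ[K] Module.End K (commSubmodule K n) :=
  let L i : mulOpAlgebra K n := ⟨leftMulC (y i), Algebra.subset_adjoin (.inl ⟨y i, rfl⟩)⟩
  let R i : mulOpAlgebra K n := ⟨rightMulC (y i), Algebra.subset_adjoin (.inr ⟨y i, rfl⟩)⟩
  (mulOpAlgebra K n).val.comp (MvPolynomial.aeval (Sum.elim L fun i => R i - L i))

@[simp]
theorem actionHom_X_inl {ι : Type*} (y : ι → FreeMetab K n) (i : ι) :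
    actionHom y (MvPolynomial.X (.inl i)) = leftMulC (y i) := by
  simp [actionHom]

@[simp]
theorem actionHom_X_inr {ι : Type*} (y : ι → FreeMetab K n) (i : ι) :
    actionHom y (MvPolynomial.X (.inr i)) = rightMulC (y i) - leftMulC (y i) := by
  simp [actionHom]

end Operators

section FreeMetabAction

open MvPolynomial

variable {K : Type*} [CommRing K] {d : ℕ}

theorem mulLeft_comp_subtype {n : ℕ} (x : FreeMetab K n) :
    LinearMap.mulLeft K x ∘ₗ (commSubmodule K n).subtype =
      (commSubmodule K n).subtype ∘ₗ leftMulC x :=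
  rfl

theorem mulRight_sub_mulLeft_comp_subtype {n : ℕ} (x : FreeMetab K n) :
    (LinearMap.mulRight K x - LinearMap.mulLeft K x) ∘ₗ (commSubmodule K n).subtype =
      (commSubmodule K n).subtype ∘ₗ (rightMulC x - leftMulC x) :=
  LinearMap.ext fun _ => rfl

variable (K d) in
def lowerGens : Fin d → FreeMetab K (d + 1) := fun i => xg K (d + 1) i.castSucc

variable (K) in
def lastCommutator (k : Fin d) : commSubmodule K (d + 1) :=
  ⟨xg K (d + 1) (Fin.last d) * xg K (d + 1) k.castSucc
      - xg K (d + 1) k.castSucc * xg K (d + 1) (Fin.last d), commIdeal.commutator_mem _ _⟩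

theorem monActS_comp_subtype (m : (Fin d ⊕ Fin d) →₀ ℕ) :
    monActS K d m ∘ₗ (commSubmodule K (d + 1)).subtype =
      (commSubmodule K (d + 1)).subtype ∘ₗ actionHom (lowerGens K d) (monomial m 1) := by
  simp only [monomial_one_eq_prod_ofFn, map_mul, map_list_prod, List.map_ofFn,
    Function.comp_def, map_pow, actionHom_X_inl, actionHom_X_inr, monActS,
    Module.End.mul_eq_comp]
  rw [LinearMap.comp_assoc,
    LinearMap.ofFn_prod_pow_comp_subtype fun _ => mulRight_sub_mulLeft_comp_subtype _,
    ← LinearMap.comp_assoc, LinearMap.ofFn_prod_pow_comp_subtype fun _ => mulLeft_comp_subtype _,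
    LinearMap.comp_assoc]
  rfl

theorem actS_coe (p : PolyUV K d) (w : commSubmodule K (d + 1)) :
    actS K d p w = ↑(actionHom (lowerGens K d) p w) := by
  conv_rhs => rw [p.as_sum]
  simp only [actS, map_sum, LinearMap.sum_apply, Submodule.coe_sum]
  refine Finset.sum_congr rfl fun m _ => ?_
  rw [monomial_eq_smul_monomial_one, map_smul, LinearMap.smul_apply, Submodule.coe_smul]
  exact congrArg _ (LinearMap.congr_fun (monActS_comp_subtype m) w)

theorem piMap_eq_sum_pderiv (p : PolyUV K d) :
    piMap K d p =
      ↑(∑ k, actionHom (lowerGens K d) (pderiv (.inr k) p) (lastCommutator K k)) := by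
  conv_rhs => rw [p.as_sum]
  simp only [map_sum, LinearMap.sum_apply, Submodule.coe_sum, pderiv_monomial]
  rw [Finset.sum_comm, piMap]
  refine Finset.sum_congr rfl fun m _ => ?_
  rw [Finset.smul_sum]
  refine Finset.sum_congr rfl fun k _ => ?_
  rw [monomial_eq_smul_monomial_one, map_smul, LinearMap.smul_apply, Submodule.coe_smul,
    ← smul_smul, ← Nat.cast_smul_eq_nsmul K]
  exact congrArg _ (congrArg _ (LinearMap.congr_fun (monActS_comp_subtype _) (lastCommutator K k)))

end FreeMetabAction

theorem pi_derivation_property_general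
    (K : Type*) [Field K] (d : ℕ)
    (p q : PolyUV K d) :
    piMap K d (p * q) = actS K d q (piMap K d p) + actS K d p (piMap K d q) := by
  rw [piMap_eq_sum_pderiv, piMap_eq_sum_pderiv, piMap_eq_sum_pderiv, actS_coe, actS_coe,
    MvPolynomial.sum_pderiv_mul_apply, Submodule.coe_add]

/-- For `p, q ∈ ω(K[V_d])` one has `π(pq) = π(p)·q + π(q)·p`. -/
theorem pi_derivation_property
    (K : Type*) [Field K] [CharZero K] (d : ℕ) (hd : 1 ≤ d)
    (p q : PolyUV K d) (hp : p ∈ omegaV K d) (hq : q ∈ omegaV K d) :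
    piMap K d (p * q) = actS K d q (piMap K d p) + actS K d p (piMap K d q) :=
  pi_derivation_property_general K d p q
end
end

section
/- Assume δ(x_d) = 0 and δ maps span(x_1,…,x_{d−1}) into itself, acting there as a nilpotent linear operator, with the corresponding action on K[U_d,V_d] (so δ(u_d) = δ(v_d) = 0). Then the derivation δ and the map π commute: δ(π(w)) = π(δ(w)) for every w ∈ K[U_{d−1},V_{d−1}]_ω. -/
noncomputable section

/-- The ideal `K[U_d,V_d]_ω`: the span of the monomials of positive total degree
in the variables `v_1,…,v_d`. -/
def omegaUV (K : Type*) [CommRing K] (d : ℕ) : Submodule K (PolyUV K d) :=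
  Submodule.span K {w : PolyUV K d | ∃ m : (Fin d ⊕ Fin d) →₀ ℕ,
    (∃ i, m (Sum.inr i) ≠ 0) ∧ w = MvPolynomial.monomial m (1 : K)}

/-!
The commutator ideal `F'` of a metabelian algebra is a module over `K[U,V]`: `u_i` acts by
`f ↦ x_i f` and `v_i` by `f ↦ [f, x_i]`, and these operators commute on `F'` because all
products of two commutators vanish. So `K[U,V]` acts on `F'` through an algebra map `ρ`, and
`π(p) = Σ_k ρ(∂p/∂v_k) [x_{d+1}, x_k]`.

A derivation `δ` of the algebra that acts on `x_1, …, x_d` as `δ'` acts on `u_1, …, v_d` satisfies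
`δ (ρ(p) w) = ρ(p) (δ w) + ρ(δ' p) w` on `F'`: the identity `δ ρ(p) - ρ(p) δ = ρ(δ' p)` is
preserved under sums and products by the Leibniz rule, so it suffices to check it on the
variables. Since `δ x_{d+1} = 0`, `δ [x_{d+1}, x_k] = Σ_i α_ik [x_{d+1}, x_i]`, and on the other
side `∂_{v_k} δ' = δ' ∂_{v_k} + Σ_j α_kj ∂_{v_j}`; the two resulting double sums agree.
-/

section

open MvPolynomial

namespace Submodule

variable {R V : Type*} [CommRing R] [AddCommGroup V] [Module R V] (p : Submodule R V)

def invtEnd : Subalgebra R (Module.End R V) where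
  carrier := {f | Set.MapsTo f p p}
  mul_mem' hf hg := hf.comp hg
  add_mem' hf hg _ hx := p.add_mem (hf hx) (hg hx)
  algebraMap_mem' r _ hx := p.smul_mem r hx

def restrictEnd : p.invtEnd →ₐ[R] Module.End R p where
  toFun f := f.1.restrict f.2
  map_one' := rfl
  map_mul' _ _ := rfl
  map_zero' := rfl
  map_add' _ _ := rfl
  commutes' _ := rfl

@[simp]
theorem coe_restrictEnd_apply (f : p.invtEnd) (x : p) : (p.restrictEnd f x : V) = f.1 x := rfl

end Submodule

section CommutingEvaluation

variable {R A σ : Type*} [CommRing R] [Semiring A] [Algebra R A]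

open scoped IsMulCommutative in
def aevalOfCommute (t : σ → A) (ht : ∀ i j, Commute (t i) (t j)) : MvPolynomial σ R →ₐ[R] A :=
  have := Algebra.isMulCommutative_adjoin R (s := Set.range t) <| by
    rintro _ ⟨i, rfl⟩ _ ⟨j, rfl⟩; exact ht i j
  (Algebra.adjoin R (Set.range t)).val.comp
    (aeval fun i => ⟨t i, Algebra.subset_adjoin ⟨i, rfl⟩⟩)

@[simp]
theorem aevalOfCommute_X (t : σ → A) (ht : ∀ i j, Commute (t i) (t j)) (i : σ) :
    aevalOfCommute (R := R) t ht (X i) = t i := by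
  simp [aevalOfCommute]

theorem mul_algHom_eq_of_forall_X (ρ : MvPolynomial σ R →ₐ[R] A)
    (δ : Derivation R (MvPolynomial σ R) (MvPolynomial σ R)) (D : A)
    (hX : ∀ s, D * ρ (X s) = ρ (X s) * D + ρ (δ (X s))) (p : MvPolynomial σ R) :
    D * ρ p = ρ p * D + ρ (δ p) := by
  induction p using MvPolynomial.induction_on with
  | C a => simp [← algebraMap_eq, Algebra.commutes]
  | add p q hp hq => simp only [map_add, mul_add, add_mul, hp, hq]; abel
  | mul_X p s ih =>
    rw [Derivation.leibniz, smul_eq_mul, smul_eq_mul, mul_comm (X s), map_add, map_mul, map_mul,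
      map_mul, ← mul_assoc, ih, add_mul, mul_assoc, hX]
    simp only [mul_add, mul_assoc]
    abel

end CommutingEvaluation

theorem monomial_one_eq_ofFn_prod {R : Type*} [CommRing R] {a b : ℕ}
    (m : (Fin a ⊕ Fin b) →₀ ℕ) :
    monomial m (1 : R) = (List.ofFn fun i => X (Sum.inl i) ^ m (Sum.inl i)).prod
      * (List.ofFn fun i => X (Sum.inr i) ^ m (Sum.inr i)).prod := by
  rw [monomial_eq, C_1, one_mul, Finsupp.prod_fintype _ _ (fun _ => pow_zero _),
    Fintype.prod_sum_type, List.prod_ofFn, List.prod_ofFn]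

theorem pderiv_inr_comp_derivation {R ι : Type*} [CommRing R] [Fintype ι] [DecidableEq ι]
    {α : ι → ι → R} {δ : Derivation R (MvPolynomial (ι ⊕ ι) R) (MvPolynomial (ι ⊕ ι) R)}
    (hu : ∀ j, δ (X (Sum.inl j)) = ∑ i, α i j • X (Sum.inl i))
    (hv : ∀ j, δ (X (Sum.inr j)) = ∑ i, α i j • X (Sum.inr i)) (k : ι)
    (p : MvPolynomial (ι ⊕ ι) R) :
    pderiv (Sum.inr k) (δ p) = δ (pderiv (Sum.inr k) p) + ∑ j, α k j • pderiv (Sum.inr j) p := by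
  have hsum : ∀ q, (∑ j, α k j • pderiv (R := R) (Sum.inr j : ι ⊕ ι)) q
      = ∑ j, α k j • pderiv (Sum.inr j) q := fun q => by
    rw [← Derivation.coeFnAddMonoidHom_apply, map_sum, Finset.sum_apply]
    rfl
  have hbracket : ⁅pderiv (R := R) (Sum.inr k : ι ⊕ ι), δ⁆ = ∑ j, α k j • pderiv (Sum.inr j) := by
    refine derivation_ext fun s => ?_
    rw [Derivation.commutator_apply, hsum]
    cases s with
    | inl i => simp [hu, pderiv_X]
    | inr i => simp [hv, pderiv_X, Pi.single_apply, apply_ite δ]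
  have := congrArg (fun D => D p) hbracket
  simp only [Derivation.commutator_apply, hsum] at this
  rw [← this]
  abel

section CommSpan

variable (K : Type*) [CommRing K] {A : Type*} [Ring A] [Algebra K A]

/-- `commIdeal`, as a `K`-submodule of an arbitrary `K`-algebra. -/
def commSpan (A : Type*) [Ring A] [Algebra K A] : Submodule K A :=
  Submodule.span K {z | ∃ a f g b : A, z = a * (f * g - g * f) * b}

variable {K}

theorem commutator_mem_commSpan (f g : A) : f * g - g * f ∈ commSpan K A :=
  Submodule.subset_span ⟨1, f, g, 1, by simp⟩

theorem mul_mem_commSpan (a : A) {w : A} (hw : w ∈ commSpan K A) : a * w ∈ commSpan K A := by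
  induction hw using Submodule.span_induction with
  | mem z hz =>
    obtain ⟨x, f, g, b, rfl⟩ := hz
    exact Submodule.subset_span ⟨a * x, f, g, b, by simp only [mul_assoc]⟩
  | zero => simp
  | add u v _ _ hu hv => rw [mul_add]; exact add_mem hu hv
  | smul c u _ hu => rw [mul_smul_comm]; exact Submodule.smul_mem _ _ hu

theorem mem_commSpan_mul {w : A} (hw : w ∈ commSpan K A) (a : A) : w * a ∈ commSpan K A := by
  induction hw using Submodule.span_induction with
  | mem z hz =>
    obtain ⟨x, f, g, b, rfl⟩ := hz
    exact Submodule.subset_span ⟨x, f, g, b * a, by simp only [mul_assoc]⟩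
  | zero => simp
  | add u v _ _ hu hv => rw [add_mul]; exact add_mem hu hv
  | smul c u _ hu => rw [smul_mul_assoc]; exact Submodule.smul_mem _ _ hu

theorem map_mem_commSpan_of_leibniz {δ : A →ₗ[K] A} (hδ : ∀ a b, δ (a * b) = δ a * b + a * δ b)
    {w : A} (hw : w ∈ commSpan K A) : δ w ∈ commSpan K A := by
  induction hw using Submodule.span_induction with
  | mem z hz =>
    obtain ⟨a, f, g, b, rfl⟩ := hz
    have hgen : ∀ a f g b : A, a * (f * g - g * f) * b ∈ commSpan K A :=
      fun a f g b => Submodule.subset_span ⟨a, f, g, b, rfl⟩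
    have hexpand : δ (a * (f * g - g * f) * b) = δ a * (f * g - g * f) * b
        + a * (δ f * g - g * δ f) * b + a * (f * δ g - δ g * f) * b
        + a * (f * g - g * f) * δ b := by
      simp only [hδ, map_sub, mul_add, add_mul, mul_sub, sub_mul]; abel
    rw [hexpand]
    exact add_mem (add_mem (add_mem (hgen _ _ _ _) (hgen _ _ _ _)) (hgen _ _ _ _)) (hgen _ _ _ _)
  | zero => simp
  | add u v _ _ hu hv => rw [map_add]; exact add_mem hu hv
  | smul c u _ hu => rw [map_smul]; exact Submodule.smul_mem _ _ hu

def mulLeftInvt (a : A) : (commSpan K A).invtEnd :=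
  ⟨LinearMap.mulLeft K a, fun _ hw => mul_mem_commSpan a hw⟩

def mulRightInvt (a : A) : (commSpan K A).invtEnd :=
  ⟨LinearMap.mulRight K a, fun _ hw => mem_commSpan_mul hw a⟩

theorem commute_mulLeftInvt_mulRightInvt (a b : A) :
    Commute ((commSpan K A).restrictEnd (mulLeftInvt a))
      ((commSpan K A).restrictEnd (mulRightInvt b)) := by
  ext w
  simp [mulLeftInvt, mulRightInvt, mul_assoc]

end CommSpan

def IsMetabelian (A : Type*) [Ring A] : Prop :=
  ∀ a b c e : A, (a * b - b * a) * (c * e - e * c) = 0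

section Metabelian

variable {K : Type*} [CommRing K] {A : Type*} [Ring A] [Algebra K A] (hA : IsMetabelian A)
include hA

theorem IsMetabelian.commutator_mul_mul_commutator (a b t c e : A) :
    (a * b - b * a) * t * (c * e - e * c) = 0 := by
  have key : (a * b - b * a) * t * (c * e - e * c)
      = (a * b - b * a) * (t * c * e - e * (t * c)) - (a * b - b * a) * (t * e - e * t) * c := by
    simp only [mul_sub, sub_mul, mul_assoc]; abel
  rw [key, hA, hA, zero_mul, sub_zero]

theorem IsMetabelian.commutator_mul_eq_zero (a b : A) {w : A} (hw : w ∈ commSpan K A) :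
    (a * b - b * a) * w = 0 := by
  induction hw using Submodule.span_induction with
  | mem z hz =>
    obtain ⟨x, f, g, y, rfl⟩ := hz
    rw [← mul_assoc, ← mul_assoc, hA.commutator_mul_mul_commutator, zero_mul]
  | zero => simp
  | add x y _ _ hx hy => rw [mul_add, hx, hy, add_zero]
  | smul c x _ hx => rw [mul_smul_comm, hx, smul_zero]

theorem IsMetabelian.mul_commutator_eq_zero (a b : A) {w : A} (hw : w ∈ commSpan K A) :
    w * (a * b - b * a) = 0 := by
  induction hw using Submodule.span_induction with
  | mem z hz =>
    obtain ⟨x, f, g, y, rfl⟩ := hz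
    rw [mul_assoc, mul_assoc, ← mul_assoc _ y, hA.commutator_mul_mul_commutator, mul_zero]
  | zero => simp
  | add x y _ _ hx hy => rw [add_mul, hx, hy, add_zero]
  | smul c x _ hx => rw [smul_mul_assoc, hx, smul_zero]

theorem IsMetabelian.commute_mulLeftInvt (a b : A) :
    Commute ((commSpan K A).restrictEnd (mulLeftInvt a))
      ((commSpan K A).restrictEnd (mulLeftInvt b)) := by
  ext ⟨w, hw⟩
  simpa [mulLeftInvt, ← mul_assoc, sub_mul, sub_eq_zero] using hA.commutator_mul_eq_zero a b hw

theorem IsMetabelian.commute_mulRightInvt (a b : A) :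
    Commute ((commSpan K A).restrictEnd (mulRightInvt a))
      ((commSpan K A).restrictEnd (mulRightInvt b)) := by
  ext ⟨w, hw⟩
  simpa [mulRightInvt, mul_assoc, mul_sub, sub_eq_zero] using hA.mul_commutator_eq_zero b a hw

end Metabelian

section VariableAction

variable {K : Type*} [CommRing K] {A : Type*} [Ring A] [Algebra K A] {ι : Type*}

/-- The operators by which `u_i` (`Sum.inl i`) and `v_i` (`Sum.inr i`) act on `F'`. -/
def varOperator (x : ι → A) : ι ⊕ ι → (commSpan K A).invtEnd
  | .inl i => mulLeftInvt (x i)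
  | .inr i => mulRightInvt (x i) - mulLeftInvt (x i)

variable (hA : IsMetabelian A) (x : ι → A)
include hA

theorem IsMetabelian.commute_restrictEnd_varOperator (s t : ι ⊕ ι) :
    Commute ((commSpan K A).restrictEnd (varOperator x s))
      ((commSpan K A).restrictEnd (varOperator x t)) := by
  have hLL := hA.commute_mulLeftInvt (K := K)
  have hRR := hA.commute_mulRightInvt (K := K)
  have hLR := commute_mulLeftInvt_mulRightInvt (K := K) (A := A)
  have hsub : ∀ f g : (commSpan K A).invtEnd, (commSpan K A).restrictEnd (f - g)
      = (commSpan K A).restrictEnd f - (commSpan K A).restrictEnd g := fun _ _ => rfl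
  cases s <;> cases t <;> simp only [varOperator, hsub]
  · exact hLL _ _
  · exact (hLR _ _).sub_right (R := Module.End K (commSpan K A)) (hLL _ _)
  · exact (hLR _ _).symm.sub_left (R := Module.End K (commSpan K A)) (hLL _ _)
  · exact ((hRR _ _).sub_right (R := Module.End K (commSpan K A)) (hLR _ _).symm).sub_left
      ((hLR _ _).sub_right (hLL _ _))

def IsMetabelian.polyAct : MvPolynomial (ι ⊕ ι) K →ₐ[K] Module.End K (commSpan K A) :=
  aevalOfCommute (fun s => (commSpan K A).restrictEnd (varOperator x s))
    (hA.commute_restrictEnd_varOperator x)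

@[simp]
theorem IsMetabelian.polyAct_X (s : ι ⊕ ι) :
    hA.polyAct x (X s) = (commSpan K A).restrictEnd (varOperator x s) :=
  aevalOfCommute_X _ _ s

theorem IsMetabelian.restrict_polyAct_apply [Fintype ι] {δ : A →ₗ[K] A}
    (hδ : ∀ a b, δ (a * b) = δ a * b + a * δ b) {α : ι → ι → K}
    (hδx : ∀ j, δ (x j) = ∑ i, α i j • x i)
    {δ' : Derivation K (MvPolynomial (ι ⊕ ι) K) (MvPolynomial (ι ⊕ ι) K)}
    (hu : ∀ j, δ' (X (.inl j)) = ∑ i, α i j • X (.inl i))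
    (hv : ∀ j, δ' (X (.inr j)) = ∑ i, α i j • X (.inr i))
    (p : MvPolynomial (ι ⊕ ι) K) (w : commSpan K A) :
    δ.restrict (fun _ => map_mem_commSpan_of_leibniz hδ) (hA.polyAct x p w)
      = hA.polyAct x p (δ.restrict (fun _ => map_mem_commSpan_of_leibniz hδ) w)
        + hA.polyAct x (δ' p) w := by
  set D : Module.End K (commSpan K A) := δ.restrict fun _ => map_mem_commSpan_of_leibniz hδ
  have hX : ∀ s, D * hA.polyAct x (X s) = hA.polyAct x (X s) * D + hA.polyAct x (δ' (X s)) := by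
    intro s
    ext ⟨w, hw⟩
    cases s with
    | inl j =>
      simp [D, hu, varOperator, mulLeftInvt, hδ, hδx, Finset.sum_mul]
      abel
    | inr j =>
      simp [D, hv, varOperator, mulLeftInvt, mulRightInvt, hδ, hδx, Finset.sum_mul,
        Finset.mul_sum, smul_sub, Finset.sum_sub_distrib]
      abel
  exact LinearMap.congr_fun (mul_algHom_eq_of_forall_X _ δ' D hX p) w

end VariableAction

section FreeMetab

variable {K : Type*} [CommRing K] {d : ℕ}

theorem isMetabelian_freeMetab (n : ℕ) : IsMetabelian (FreeMetab K n) := by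
  intro a b c e
  obtain ⟨A, rfl⟩ := RingQuot.mkAlgHom_surjective K (MetabRel K n) a
  obtain ⟨B, rfl⟩ := RingQuot.mkAlgHom_surjective K (MetabRel K n) b
  obtain ⟨C, rfl⟩ := RingQuot.mkAlgHom_surjective K (MetabRel K n) c
  obtain ⟨E, rfl⟩ := RingQuot.mkAlgHom_surjective K (MetabRel K n) e
  simpa only [map_mul, map_sub, map_zero] using
    RingQuot.mkAlgHom_rel K (show MetabRel K n _ 0 from ⟨rfl, A, B, C, E, rfl⟩)

variable (K d) in
def polyActS : PolyUV K d →ₐ[K] Module.End K (commSpan K (FreeMetab K (d + 1))) :=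
  (isMetabelian_freeMetab (d + 1)).polyAct fun i => xg K (d + 1) i.castSucc

variable (K d) in
def commLast (k : Fin d) : commSpan K (FreeMetab K (d + 1)) :=
  ⟨_, commutator_mem_commSpan (xg K (d + 1) (Fin.last d)) (xg K (d + 1) k.castSucc)⟩

theorem monActS_eq_coe (m : (Fin d ⊕ Fin d) →₀ ℕ) :
    monActS K d m = ↑((List.ofFn fun i =>
        varOperator (K := K) (fun i => xg K (d + 1) i.castSucc) (.inl i) ^ m (.inl i)).prod
      * (List.ofFn fun i =>
        varOperator (K := K) (fun i => xg K (d + 1) i.castSucc) (.inr i) ^ m (.inr i)).prod) := by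
  simp [monActS, SubmonoidClass.coe_list_prod, List.map_ofFn, Function.comp_def, varOperator,
    mulLeftInvt, mulRightInvt]

theorem monActS_eq_polyActS (m : (Fin d ⊕ Fin d) →₀ ℕ) (w : commSpan K (FreeMetab K (d + 1))) :
    monActS K d m w = polyActS K d (monomial m 1) w := by
  rw [monActS_eq_coe, ← Submodule.coe_restrictEnd_apply, polyActS, monomial_one_eq_ofFn_prod]
  simp only [map_mul, map_list_prod, List.map_ofFn, Function.comp_def, map_pow,
    IsMetabelian.polyAct_X]

theorem piMap_eq_linearCombination (p : PolyUV K d) :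
    piMap K d p = Finsupp.linearCombination K (fun m : (Fin d ⊕ Fin d) →₀ ℕ =>
      ∑ k : Fin d, m (Sum.inr k) • monActS K d (m - Finsupp.single (Sum.inr k) 1) (commLast K d k))
      (AddMonoidAlgebra.coeffLinearEquiv K p) := rfl

theorem piMap_eq_sum_polyActS (p : PolyUV K d) :
    piMap K d p = ↑(∑ k, polyActS K d (pderiv (Sum.inr k) p) (commLast K d k)) := by
  induction p using MvPolynomial.induction_on' with
  | monomial m c =>
    rw [piMap_eq_linearCombination, show AddMonoidAlgebra.coeffLinearEquiv K (monomial m c)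
      = Finsupp.single m c from rfl, Finsupp.linearCombination_single, Finset.smul_sum,
      Submodule.coe_sum]
    refine Finset.sum_congr rfl fun k _ => ?_
    rw [pderiv_monomial, ← mul_one (c * _), ← smul_eq_mul, ← smul_monomial, map_smul,
      LinearMap.smul_apply, Submodule.coe_smul, ← monActS_eq_polyActS, mul_smul,
      Nat.cast_smul_eq_nsmul, smul_comm]
  | add p q hp hq =>
    rw [piMap_eq_linearCombination, map_add, map_add, ← piMap_eq_linearCombination,
      ← piMap_eq_linearCombination, hp, hq]
    simp only [map_add, LinearMap.add_apply, Finset.sum_add_distrib, Submodule.coe_add]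

theorem restrict_commLast {δ : FreeMetab K (d + 1) →ₗ[K] FreeMetab K (d + 1)}
    (hδ : ∀ a b, δ (a * b) = δ a * b + a * δ b) {α : Fin d → Fin d → K}
    (hδx : ∀ j : Fin d, δ (xg K (d + 1) j.castSucc) = ∑ i, α i j • xg K (d + 1) i.castSucc)
    (hδlast : δ (xg K (d + 1) (Fin.last d)) = 0) (k : Fin d) :
    δ.restrict (fun _ => map_mem_commSpan_of_leibniz hδ) (commLast K d k)
      = ∑ i, α i k • commLast K d i := by
  apply Subtype.ext
  simp [commLast, hδ, hδx, hδlast, Finset.mul_sum, Finset.sum_mul, ← Finset.sum_sub_distrib,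
    smul_sub]

end FreeMetab

end

theorem delta_commutes_with_pi_general
    (K : Type*) [Field K] (d : ℕ)
    (α : Matrix (Fin d) (Fin d) K)
    (δB : FreeMetab K (d + 1) →ₗ[K] FreeMetab K (d + 1))
    (hleibB : ∀ a b : FreeMetab K (d + 1), δB (a * b) = δB a * b + a * δB b)
    (hδBx : ∀ j : Fin d, δB (xg K (d + 1) j.castSucc)
      = ∑ i : Fin d, α i j • xg K (d + 1) i.castSucc)
    (hδBlast : δB (xg K (d + 1) (Fin.last d)) = 0)
    (δ' : Derivation K (PolyUV K d) (PolyUV K d))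
    (hu : ∀ j, δ' (uP K d j) = ∑ i, α i j • uP K d i)
    (hv : ∀ j, δ' (vP K d j) = ∑ i, α i j • vP K d i) :
    ∀ w ∈ omegaUV K d, δB (piMap K d w) = piMap K d (δ' w) := by
  intro p _
  have hcompat := (isMetabelian_freeMetab (d + 1)).restrict_polyAct_apply _ hleibB hδBx hu hv
  rw [piMap_eq_sum_polyActS, piMap_eq_sum_polyActS]
  refine congrArg Subtype.val
    (?_ : δB.restrict (fun _ => map_mem_commSpan_of_leibniz hleibB) _ = _)
  simp only [polyActS, map_sum, hcompat, restrict_commLast hleibB hδBx hδBlast,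
    pderiv_inr_comp_derivation hu hv, map_add, map_smul, LinearMap.add_apply,
    LinearMap.smul_apply, Finset.sum_add_distrib, LinearMap.sum_apply]
  rw [Finset.sum_comm]
  exact add_comm _ _

/-- If the Weitzenböck derivation `δ` of `F_{d+1}` satisfies
`δ(x_{d+1}) = 0` and maps the span of `x_1,…,x_d` nilpotently into itself,
then `δ` and `π` commute on `K[U_d,V_d]_ω`: `δ(π(w)) = π(δ(w))`. -/
theorem delta_commutes_with_pi
    (K : Type*) [Field K] [CharZero K] (d : ℕ) (hd : 1 ≤ d)
    (α : Matrix (Fin d) (Fin d) K) (hnil : IsNilpotent α) (hne : α ≠ 0)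
    (δB : FreeMetab K (d + 1) →ₗ[K] FreeMetab K (d + 1))
    (hleibB : ∀ a b : FreeMetab K (d + 1), δB (a * b) = δB a * b + a * δB b)
    (hδBx : ∀ j : Fin d, δB (xg K (d + 1) j.castSucc)
      = ∑ i : Fin d, α i j • xg K (d + 1) i.castSucc)
    (hδBlast : δB (xg K (d + 1) (Fin.last d)) = 0)
    (δ' : Derivation K (PolyUV K d) (PolyUV K d))
    (hu : ∀ j, δ' (uP K d j) = ∑ i, α i j • uP K d i)
    (hv : ∀ j, δ' (vP K d j) = ∑ i, α i j • vP K d i) :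
    ∀ w ∈ omegaUV K d, δB (piMap K d w) = piMap K d (δ' w) :=
  delta_commutes_with_pi_general K d α δB hleibB hδBx hδBlast δ' hu hv
end
end

section
/- In the free metabelian associative algebra F_3 the following identity holds: x_1[[x_2,x_1],x_3] − ( x_1[[x_3,x_1],x_2] − x_2[[x_3,x_1],x_1] ) + [ x_1[x_3,x_2] − x_2[x_3,x_1], x_1 ] = 0. -/
noncomputable section

/-- The commutator `[f,g] = fg - gf` in `F₃`. -/
def brk (K : Type*) [CommRing K] (f g : FreeMetab K 3) : FreeMetab K 3 := f * g - g * f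

lemma aux_comm_identity (R : Type*) [Ring R] (a b c : R) :
    a*((b*a-a*b)*c - c*(b*a-a*b)) - (a*((c*a-a*c)*b - b*(c*a-a*c)) - b*((c*a-a*c)*a - a*(c*a-a*c)))
      + ((a*(c*b-b*c) - b*(c*a-a*c))*a - a*(a*(c*b-b*c)-b*(c*a-a*c)))
      = (b*a-a*b)*(a*c-c*a) := by noncomm_ring

/-- In the free metabelian associative algebra `F₃`:
`x₁[[x₂,x₁],x₃] - (x₁[[x₃,x₁],x₂] - x₂[[x₃,x₁],x₁]) + [x₁[x₃,x₂] - x₂[x₃,x₁], x₁] = 0`. -/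
theorem relation_in_F3 (K : Type*) [Field K] [CharZero K] :
    xg K 3 0 * brk K (brk K (xg K 3 1) (xg K 3 0)) (xg K 3 2)
      - (xg K 3 0 * brk K (brk K (xg K 3 2) (xg K 3 0)) (xg K 3 1)
          - xg K 3 1 * brk K (brk K (xg K 3 2) (xg K 3 0)) (xg K 3 0))
      + brk K (xg K 3 0 * brk K (xg K 3 2) (xg K 3 1)
          - xg K 3 1 * brk K (xg K 3 2) (xg K 3 0)) (xg K 3 0)
      = 0 := by
  have h : MetabRel K 3
      ((FreeAlgebra.ι K (1 : Fin 3) * FreeAlgebra.ι K (0 : Fin 3)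
          - FreeAlgebra.ι K (0 : Fin 3) * FreeAlgebra.ι K (1 : Fin 3))
        * (FreeAlgebra.ι K (0 : Fin 3) * FreeAlgebra.ι K (2 : Fin 3)
          - FreeAlgebra.ι K (2 : Fin 3) * FreeAlgebra.ι K (0 : Fin 3))) 0 :=
    ⟨rfl, _, _, _, _, rfl⟩
  have key := RingQuot.mkAlgHom_rel K h
  simp only [map_zero, map_sub, map_mul] at key
  unfold brk xg
  rw [aux_comm_identity]
  exact key
end
end
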